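/- For every vertex u of G, every integer l ≥ 1, every y ∈ (ZMod 2)^d and every T ⊆ [p], the following hold: if T_u ⊆ T, then Σ_{W ∈ C(u,l,y,T)} f(W) = Σ_{w : {u,w} ∈ E(G)} x_{{u,w}} · Σ_{W' ∈ C(w, l−1, y + g({u,w}), T ∖ T_u)} f(W'); and if T_u is not a subset of T, then C(u,l,y,T) is empty (so the sum is 0). (Since the group has exponent 2, y + g({u,w}) equals y − g({u,w}).) -/
import Mathlib


/-- The monomial `f(W)` of a walk: the product (with multiplicity) of the variables
of the traversed edges (the empty product is `1`). -/
noncomputable def walkMono {V : Type*} (F : Type*) [Field F] {ℓ : ℕ}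
    (w : Fin (ℓ + 1) → V) : MvPolynomial (Sym2 V) F :=
  ∏ i : Fin ℓ, MvPolynomial.X s(w i.castSucc, w i.succ)

/-- `C(u, l, y, T)`: the set of walks of length `l` in `G` starting at `s` and ending
at `u` whose labels sum to `y`, which avoid `X i` for every `i ∉ T`, and which meet
`X i` at exactly one index for every `i ∈ T`. -/
def Cset {V : Type*} (G : SimpleGraph V) (s : V) {d p : ℕ}
    (g : Sym2 V → (Fin d → ZMod 2)) (X : Fin p → Set V)
    (u : V) (l : ℕ) (y : Fin d → ZMod 2) (T : Set (Fin p)) :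
    Set (Fin (l + 1) → V) :=
  {w | w 0 = s ∧ w (Fin.last l) = u ∧
    (∀ i : Fin l, G.Adj (w i.castSucc) (w i.succ)) ∧
    (∑ i : Fin l, g s(w i.castSucc, w i.succ)) = y ∧
    (∀ i : Fin p, i ∉ T → ∀ j : Fin (l + 1), w j ∉ X i) ∧
    (∀ i : Fin p, i ∈ T → ∃! j : Fin (l + 1), w j ∈ X i)}

theorem stmt9 {V : Type*} [Fintype V] (G : SimpleGraph V) (s : V)
    (d p : ℕ) (g : Sym2 V → (Fin d → ZMod 2)) (X : Fin p → Set V)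
    (F : Type*) [Field F] [CharP F 2]
    (u : V) (l : ℕ) (y : Fin d → ZMod 2) (T : Set (Fin p)) :
    ({i : Fin p | u ∈ X i} ⊆ T →
      (∑ᶠ W ∈ Cset G s g X u (l + 1) y T, walkMono F W) =
        ∑ᶠ v ∈ {v : V | G.Adj u v},
          MvPolynomial.X s(u, v) *
            ∑ᶠ W' ∈ Cset G s g X v l (y + g s(u, v)) (T \ {i : Fin p | u ∈ X i}),
              walkMono F W') ∧
    (¬ {i : Fin p | u ∈ X i} ⊆ T → Cset G s g X u (l + 1) y T = ∅) := by
  classical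
  constructor
  · intro hT
    have h2 : ∀ a : Fin d → ZMod 2, a + a = 0 := by
      intro a; funext i
      have h : ∀ b : ZMod 2, b + b = 0 := by decide
      exact h (a i)
    have hA := (Cset G s g X u (l + 1) y T).toFinite
    have hN := ({v : V | G.Adj u v}).toFinite
    have hB : ∀ v : V,
        (Cset G s g X v l (y + g s(u, v)) (T \ {i : Fin p | u ∈ X i})).Finite :=
      fun v => Set.toFinite _
    -- forward direction of the correspondence
    have fwd : ∀ w ∈ Cset G s g X u (l + 1) y T,
        G.Adj u (w ((Fin.last l).castSucc)) ∧
        Fin.init w ∈ Cset G s g X (w ((Fin.last l).castSucc)) l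
          (y + g s(u, w ((Fin.last l).castSucc))) (T \ {i : Fin p | u ∈ X i}) := by
      rintro w ⟨h0, hlast, hadj, hsum, havoid, hone⟩
      set v := w ((Fin.last l).castSucc) with hv
      have hAdjvu : G.Adj v u := by
        have h := hadj (Fin.last l)
        rwa [Fin.succ_last, hlast] at h
      refine ⟨hAdjvu.symm, ?_, rfl, ?_, ?_, ?_, ?_⟩
      · show w ((0 : Fin (l + 1)).castSucc) = s
        rwa [Fin.castSucc_zero]
      · intro i
        have h := hadj i.castSucc
        show G.Adj (w i.castSucc.castSucc) (w i.succ.castSucc)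
        rwa [Fin.succ_castSucc] at h
      · -- label sum
        rw [Fin.sum_univ_castSucc] at hsum
        rw [Fin.succ_last, hlast] at hsum
        have hS : (∑ i : Fin l, g s(w i.castSucc.castSucc, w i.castSucc.succ)) =
            y + g s(v, u) := by
          calc (∑ i : Fin l, g s(w i.castSucc.castSucc, w i.castSucc.succ))
              = ((∑ i : Fin l, g s(w i.castSucc.castSucc, w i.castSucc.succ))
                  + g s(v, u)) + g s(v, u) := by
                rw [add_assoc, h2, add_zero]
            _ = y + g s(v, u) := by rw [hsum]
        show (∑ i : Fin l, g s(w i.castSucc.castSucc, w i.succ.castSucc)) = _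
        simp only [← Fin.succ_castSucc]
        rw [hS, Sym2.eq_swap]
      · -- avoidance
        intro i hi j hj
        by_cases hiT : i ∈ T
        · have hiu : u ∈ X i := by
            by_contra hu
            exact hi ⟨hiT, hu⟩
          obtain ⟨k, _, hk⟩ := hone i hiT
          have h1 : (Fin.last (l + 1)) = k :=
            hk _ (show w (Fin.last (l + 1)) ∈ X i by rw [hlast]; exact hiu)
          have h2' : j.castSucc = k := hk _ hj
          exact absurd (h2'.trans h1.symm) (Fin.castSucc_lt_last j).ne
        · exact havoid i hiT j.castSucc hj
      · -- exactly one
        intro i hi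
        obtain ⟨hiT, hiu⟩ := hi
        obtain ⟨k, hk, hkuniq⟩ := hone i hiT
        have hkne : k ≠ Fin.last (l + 1) := by
          intro h
          rw [h, hlast] at hk
          exact hiu hk
        obtain ⟨k', rfl⟩ := Fin.exists_castSucc_eq.mpr hkne
        refine ⟨k', hk, fun j hj => ?_⟩
        exact Fin.castSucc_injective _ (hkuniq j.castSucc hj)
    -- backward direction
    have bwd : ∀ v : V, G.Adj u v →
        ∀ w' ∈ Cset G s g X v l (y + g s(u, v)) (T \ {i : Fin p | u ∈ X i}),
        Fin.snoc w' u ∈ Cset G s g X u (l + 1) y T := by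
      rintro v hAdj w' ⟨h0, hlast, hadj, hsum, havoid, hone⟩
      refine ⟨?_, ?_, ?_, ?_, ?_, ?_⟩
      · show (Fin.snoc w' u : Fin (l + 1 + 1) → V) ((0 : Fin (l + 1)).castSucc) = s
        rw [Fin.snoc_castSucc, h0]
      · exact Fin.snoc_last _ _
      · intro i
        induction i using Fin.lastCases with
        | last =>
          simp only [Fin.succ_last, Fin.snoc_last, Fin.snoc_castSucc, hlast]
          exact hAdj.symm
        | cast j =>
          simp only [Fin.succ_castSucc, Fin.snoc_castSucc]
          exact hadj j
      · rw [Fin.sum_univ_castSucc]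
        simp only [Fin.succ_castSucc, Fin.snoc_castSucc, Fin.succ_last, Fin.snoc_last]
        rw [hsum, hlast, Sym2.eq_swap, add_assoc, h2, add_zero]
      · intro i hiT j hj
        have hiu : u ∉ X i := fun hu => hiT (hT hu)
        induction j using Fin.lastCases with
        | last => rw [Fin.snoc_last] at hj; exact hiu hj
        | cast k =>
          rw [Fin.snoc_castSucc] at hj
          exact havoid i (fun h => hiT h.1) k hj
      · intro i hiT
        by_cases hiu : u ∈ X i
        · refine ⟨Fin.last (l + 1),
            show (Fin.snoc w' u : Fin (l + 1 + 1) → V) (Fin.last (l + 1)) ∈ X i by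
              rw [Fin.snoc_last]; exact hiu, fun j hj => ?_⟩
          have hj' : (Fin.snoc w' u : Fin (l + 1 + 1) → V) j ∈ X i := hj
          induction j using Fin.lastCases with
          | last => rfl
          | cast k =>
            rw [Fin.snoc_castSucc] at hj'
            exact absurd hj' (havoid i (fun h => h.2 hiu) k)
        · obtain ⟨k, hk, hkuniq⟩ := hone i ⟨hiT, hiu⟩
          refine ⟨k.castSucc,
            show (Fin.snoc w' u : Fin (l + 1 + 1) → V) k.castSucc ∈ X i by
              rw [Fin.snoc_castSucc]; exact hk, fun j hj => ?_⟩
          have hj' : (Fin.snoc w' u : Fin (l + 1 + 1) → V) j ∈ X i := hj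
          induction j using Fin.lastCases with
          | last => rw [Fin.snoc_last] at hj'; exact absurd hj' hiu
          | cast k' =>
            rw [Fin.snoc_castSucc] at hj'
            rw [hkuniq k' hj']
    -- the monomial identity
    have hmono : ∀ w ∈ Cset G s g X u (l + 1) y T,
        walkMono F w = MvPolynomial.X s(u, w ((Fin.last l).castSucc)) *
          walkMono F (Fin.init w) := by
      rintro w ⟨h0, hlast, hadj, hsum, havoid, hone⟩
      unfold walkMono
      rw [Fin.prod_univ_castSucc, Fin.succ_last, hlast]
      have he : ∀ i : Fin l,
          (MvPolynomial.X (R := F) s(w i.castSucc.castSucc, w i.castSucc.succ)) =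
            MvPolynomial.X s(Fin.init w i.castSucc, Fin.init w i.succ) := by
        intro i
        simp only [Fin.init, Fin.succ_castSucc]
      rw [Finset.prod_congr rfl (fun i _ => he i), mul_comm, Sym2.eq_swap]
    -- now the sum manipulation
    rw [finsum_mem_eq_finite_toFinset_sum _ hA, finsum_mem_eq_finite_toFinset_sum _ hN]
    calc ∑ W ∈ hA.toFinset, walkMono F W
        = ∑ x ∈ hN.toFinset.sigma (fun v => (hB v).toFinset),
            MvPolynomial.X s(u, x.1) * walkMono F x.2 := by
          refine Finset.sum_nbij'
            (fun W => (⟨W ((Fin.last l).castSucc), Fin.init W⟩ : Σ _ : V, Fin (l + 1) → V))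
            (fun x => Fin.snoc x.2 u) ?_ ?_ ?_ ?_ ?_
          · intro W hW
            rw [Set.Finite.mem_toFinset] at hW
            obtain ⟨hadj, hmem⟩ := fwd W hW
            rw [Finset.mem_sigma, Set.Finite.mem_toFinset, Set.Finite.mem_toFinset]
            exact ⟨hadj, hmem⟩
          · intro x hx
            rw [Finset.mem_sigma, Set.Finite.mem_toFinset, Set.Finite.mem_toFinset] at hx
            rw [Set.Finite.mem_toFinset]
            exact bwd x.1 hx.1 x.2 hx.2
          · intro W hW
            rw [Set.Finite.mem_toFinset] at hW
            have hlast : W (Fin.last (l + 1)) = u := hW.2.1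
            conv_lhs => rw [← hlast]
            exact Fin.snoc_init_self W
          · intro x hx
            rw [Finset.mem_sigma, Set.Finite.mem_toFinset, Set.Finite.mem_toFinset] at hx
            have hlast : x.2 (Fin.last l) = x.1 := hx.2.2.1
            simp only [Fin.snoc_castSucc, Fin.init_snoc]
            rw [hlast]
          · intro W hW
            rw [Set.Finite.mem_toFinset] at hW
            exact hmono W hW
      _ = ∑ v ∈ hN.toFinset,
            MvPolynomial.X s(u, v) *
              ∑ᶠ W' ∈ Cset G s g X v l (y + g s(u, v)) (T \ {i : Fin p | u ∈ X i}),
                walkMono F W' := by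
          rw [Finset.sum_sigma]
          refine Finset.sum_congr rfl fun v _ => ?_
          rw [finsum_mem_eq_finite_toFinset_sum _ (hB v), Finset.mul_sum]
  · intro hT
    ext w
    simp only [Set.mem_empty_iff_false, iff_false]
    rintro ⟨h0, hlast, hadj, hsum, havoid, hone⟩
    obtain ⟨i, hiXu, hiT⟩ := Set.not_subset.mp hT
    exact havoid i hiT (Fin.last (l + 1)) (by rwa [hlast])
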